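/- arXiv:1410.7637 — 2 statements merged into one kernel-verified Lean document; each statement's English description precedes it below -/
import Mathlib

section
/- Let $n \ge 10$. Then $r(K_{1,n-2}, T_n'') = 2n-5$, where $T_n''$ is the tree defined below. -/
open SimpleGraph

/-- `Contains G H` : the graph `G` contains a copy of `H` as a subgraph. -/
def Contains {V W : Type*} (G : SimpleGraph V) (H : SimpleGraph W) : Prop :=
  ∃ f : W ↪ V, ∀ a b, H.Adj a b → G.Adj (f a) (f b)

/-- The Ramsey number `r(G₁,G₂)`: the smallest positive `p` such that every graph on `p`
vertices contains a copy of `G₁` or its complement contains a copy of `G₂`. -/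
noncomputable def ramseyNumber {α β : Type*} (G₁ : SimpleGraph α) (G₂ : SimpleGraph β) : ℕ :=
  sInf {p | 0 < p ∧ ∀ G : SimpleGraph (Fin p), Contains G G₁ ∨ Contains Gᶜ G₂}

/-- The Turán/extremal number `ex(p; L)`: maximal number of edges of a graph on `p`
vertices with no copy of `L`. -/
noncomputable def exNum {W : Type*} (p : ℕ) (L : SimpleGraph W) : ℕ :=
  sSup {m | ∃ G : SimpleGraph (Fin p), ¬ Contains G L ∧ G.edgeSet.ncard = m}

/-- The maximum degree of a graph. -/
noncomputable def maxDeg {α : Type*} (G : SimpleGraph α) : ℕ :=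
  sSup {d | ∃ v, d = (G.neighborSet v).ncard}

/-- The star `K_{1,m-1}` on `m` vertices, centered at `0`. -/
def starGraph (m : ℕ) : SimpleGraph (Fin m) :=
  SimpleGraph.fromRel (fun i _ => (i : ℕ) = 0)

/-- The double star `S(n₁,n₂)`: vertex `0` is adjacent to `1` and to the `n₁` vertices
`2,…,n₁+1`; vertex `1` is adjacent to the `n₂` vertices `n₁+2,…,n₁+n₂+1`. -/
def doubleStar (n₁ n₂ : ℕ) : SimpleGraph (Fin (n₁ + n₂ + 2)) :=
  SimpleGraph.fromRel (fun i j =>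
    ((i : ℕ) = 0 ∧ (j : ℕ) = 1) ∨
    ((i : ℕ) = 0 ∧ 2 ≤ (j : ℕ) ∧ (j : ℕ) ≤ n₁ + 1) ∨
    ((i : ℕ) = 1 ∧ n₁ + 2 ≤ (j : ℕ)))

/-- The tree `Tₙ''` with edges `v₀vᵢ (1 ≤ i ≤ n-4)`, `v₁v_{n-3}`, `v₁v_{n-2}`, `v₂v_{n-1}`. -/
def treeDD (n : ℕ) : SimpleGraph (Fin n) :=
  SimpleGraph.fromRel (fun i j =>
    ((i : ℕ) = 0 ∧ 1 ≤ (j : ℕ) ∧ (j : ℕ) ≤ n - 4) ∨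
    ((i : ℕ) = 1 ∧ ((j : ℕ) = n - 3 ∨ (j : ℕ) = n - 2)) ∨
    ((i : ℕ) = 2 ∧ (j : ℕ) = n - 1))

/-- The tree `Tₙ'''` with edges `v₀vᵢ (1 ≤ i ≤ n-4)`, `v₁v_{n-3}`, `v₂v_{n-2}`, `v₃v_{n-1}`. -/
def treeDDD (n : ℕ) : SimpleGraph (Fin n) :=
  SimpleGraph.fromRel (fun i j =>
    ((i : ℕ) = 0 ∧ 1 ≤ (j : ℕ) ∧ (j : ℕ) ≤ n - 4) ∨
    ((i : ℕ) = 1 ∧ (j : ℕ) = n - 3) ∨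
    ((i : ℕ) = 2 ∧ (j : ℕ) = n - 2) ∨
    ((i : ℕ) = 3 ∧ (j : ℕ) = n - 1))

/-- The tree `Tₙ¹` with edges `v₀vᵢ (1 ≤ i ≤ n-3)`, `v_{n-4}v_{n-2}`, `v_{n-3}v_{n-1}`. -/
def treeT1 (n : ℕ) : SimpleGraph (Fin n) :=
  SimpleGraph.fromRel (fun i j =>
    ((i : ℕ) = 0 ∧ 1 ≤ (j : ℕ) ∧ (j : ℕ) ≤ n - 3) ∨
    ((i : ℕ) = n - 4 ∧ (j : ℕ) = n - 2) ∨
    ((i : ℕ) = n - 3 ∧ (j : ℕ) = n - 1))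

/-- The tree `Tₙ²` with edges `v₀vᵢ (1 ≤ i ≤ n-3)`, `v_{n-3}v_{n-2}`, `v_{n-3}v_{n-1}`. -/
def treeT2 (n : ℕ) : SimpleGraph (Fin n) :=
  SimpleGraph.fromRel (fun i j =>
    ((i : ℕ) = 0 ∧ 1 ≤ (j : ℕ) ∧ (j : ℕ) ≤ n - 3) ∨
    ((i : ℕ) = n - 3 ∧ ((j : ℕ) = n - 2 ∨ (j : ℕ) = n - 1)))


/-!
For the lower bound, `K_{n-3,n-3}` on `2n-6` vertices has maximum degree `n-3`, so it contains no
`K_{1,n-2}`, and its complement is two disjoint copies of `K_{n-3}`, which contain no connected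
graph on `n` vertices.

For the upper bound, the complement `G` of a graph on `2n-5` vertices without `K_{1,n-2}` has
minimum degree at least `k = n-3` on `2k+1` vertices, so any two non-adjacent vertices of `G` have
a common neighbour. Put the centre of `Tₙ''` at any vertex `v₀`: besides `v₁, v₂` and `n-6` leaves
in `N(v₀)`, the tree needs `a, b ∈ N(v₁)` and `c ∈ N(v₂)`, and at most `deg v₀ - k + 1` of these
three may lie in `N(v₀)`. If `deg v₀ > k`, take `c` outside `N[v₀]` and `v₂` a common neighbour of
`v₀` and `c` (if there is no such `c`, then `deg v₀ = 2k` leaves room for all three). If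
`deg v₀ = k`, either some `v₁ ∈ N(v₀)` has two neighbours `a, b` outside `N[v₀]`, or each has at
most one; then two vertices `a ≠ c` outside `N[v₀]` have distinct common neighbours `v₁, v₂` with
`v₀`, and any further neighbour `b` of `v₁` lies in `N(v₀)`.
-/

open Finset

theorem contains_iff_isContained {V W : Type*} {G : SimpleGraph V} {H : SimpleGraph W} :
    Contains G H ↔ H ⊑ G :=
  isContained_iff_exists_le_comap.symm

section Star

variable {V W : Type*} [Fintype V] {G : SimpleGraph V} [DecidableRel G.Adj]

theorem starGraph_isContained_iff [Fintype W] [DecidableEq W] (r : W) :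
    SimpleGraph.starGraph r ⊑ G ↔ ∃ v, Fintype.card W - 1 ≤ G.degree v := by
  refine ⟨fun ⟨f⟩ => ⟨f r, degree_starGraph_center (r := r) ▸ f.degree_le r⟩, fun ⟨v, hv⟩ => ?_⟩
  obtain ⟨g⟩ : Nonempty ({w // w ≠ r} ↪ G.neighborSet v) :=
    Function.Embedding.nonempty_of_card_le (by rw [card_neighborSet_eq_degree]; simpa using hv)
  let f (w : W) : V := if h : w = r then v else g ⟨w, h⟩
  have hf : ∀ w (h : w ≠ r), G.Adj v (f w) := fun w h => by
    simp only [f, dif_neg h]; exact (g ⟨w, h⟩).2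
  refine isContained_iff_exists_le_comap.2 ⟨⟨f, fun x y hxy => ?_⟩, fun x y hxy => ?_⟩
  · by_cases hx : x = r <;> by_cases hy : y = r
    · rw [hx, hy]
    · subst hx; exact absurd (hf y hy) (by rw [← hxy]; simp [f])
    · subst hy; exact absurd (hf x hx) (by rw [hxy]; simp [f])
    · simpa [f, hx, hy, Subtype.ext_iff] using
        g.injective (Subtype.ext (by simpa [f, hx, hy] using hxy))
  · obtain ⟨hne, rfl | rfl⟩ := starGraph_adj.1 hxy
    · simpa [f] using hf y hne.symm
    · simpa [f] using (hf x hne).symm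

theorem starGraph_eq {m : ℕ} (hm : 0 < m) :
    _root_.starGraph m = SimpleGraph.starGraph (⟨0, hm⟩ : Fin m) := by
  ext i j
  simp [_root_.starGraph, Fin.ext_iff]

theorem contains_starGraph_iff {m : ℕ} (hm : 0 < m) :
    Contains G (_root_.starGraph m) ↔ ∃ v, m - 1 ≤ G.degree v := by
  rw [contains_iff_isContained, starGraph_eq hm, starGraph_isContained_iff, Fintype.card_fin]

end Star

theorem SimpleGraph.Reachable.apply_eq {V ι : Type*} {G : SimpleGraph V} {σ : V → ι}
    (hσ : ∀ u v, G.Adj u v → σ u = σ v) {u v : V} (huv : G.Reachable u v) : σ u = σ v := by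
  obtain ⟨p⟩ := huv
  induction p with
  | nil => rfl
  | cons hadj _ ih => exact (hσ _ _ hadj).trans ih

theorem card_le_of_isContained_compl_completeEquipartiteGraph {W : Type*} [Fintype W]
    {H : SimpleGraph W} {r t : ℕ} (hH : H.Connected) (h : H ⊑ (completeEquipartiteGraph r t)ᶜ) :
    Fintype.card W ≤ t := by
  obtain ⟨f⟩ := h
  obtain ⟨w₀⟩ := hH.nonempty
  have hpart : ∀ w, (f w).1 = (f w₀).1 := fun w =>
    ((hH.preconnected w w₀).map f.toHom).apply_eq fun _ _ huv => not_not.1 ((compl_adj ..).1 huv).2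
  simpa using Fintype.card_le_of_injective (fun w => (f w).2) fun x y hxy =>
    f.injective (Prod.ext ((hpart x).trans (hpart y).symm) hxy)

theorem exists_not_contains_starGraph_not_contains_compl {W : Type*} [Fintype W]
    {H : SimpleGraph W} {m p : ℕ} (hp : p ≤ 2 * m) (hH : H.Connected) (hW : m < Fintype.card W) :
    ∃ G : SimpleGraph (Fin p), ¬Contains G (_root_.starGraph (m + 2)) ∧ ¬Contains Gᶜ H := by
  obtain ⟨e⟩ : Nonempty (Fin p ↪ Fin 2 × Fin m) :=
    Function.Embedding.nonempty_of_card_le (by simpa using hp)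
  let K := completeEquipartiteGraph 2 m
  refine ⟨K.comap e, fun h => ?_, fun h => ?_⟩
  · obtain ⟨v, hv⟩ := (contains_starGraph_iff (G := K) (by omega)).1 <|
      contains_iff_isContained.2 <|
        (contains_iff_isContained.1 h).trans (Embedding.comap e K).isContained
    rw [degree_completeEquipartiteGraph] at hv
    omega
  · have := card_le_of_isContained_compl_completeEquipartiteGraph hH <|
      (contains_iff_isContained.1 h).trans (Embedding.complEquiv (Embedding.comap e K)).isContained
    omega

theorem treeDD_connected {n : ℕ} (hn : 6 ≤ n) : (treeDD n).Connected := by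
  have h₀ : ∀ j : Fin n, 1 ≤ (j : ℕ) → (j : ℕ) ≤ n - 4 → (treeDD n).Reachable ⟨0, by omega⟩ j :=
    fun j h1 h4 => Adj.reachable (by simp [treeDD, Fin.ext_iff]; omega)
  refine (connected_iff_exists_forall_reachable _).2 ⟨⟨0, by omega⟩, fun ⟨j, hj⟩ => ?_⟩
  obtain rfl | hj₁ | hj₂ | hj₃ :
      j = 0 ∨ (1 ≤ j ∧ j ≤ n - 4) ∨ (j = n - 3 ∨ j = n - 2) ∨ j = n - 1 := by
    omega
  · rfl
  · exact h₀ _ hj₁.1 hj₁.2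
  · exact (h₀ ⟨1, by omega⟩ le_rfl (by simp; omega)).trans
      (Adj.reachable (by simp [treeDD, Fin.ext_iff]; omega))
  · exact (h₀ ⟨2, by omega⟩ (by simp) (by simp; omega)).trans
      (Adj.reachable (by simp [treeDD, Fin.ext_iff]; omega))

theorem treeDD_isContained_of_list {V : Type*} {G : SimpleGraph V} {n : ℕ} {v₀ v₁ v₂ a b c : V}
    {l : List V} (hn : 6 ≤ n) (hl : l.length = n - 6)
    (hnodup : ([v₀, v₁, v₂] ++ l ++ [a, b, c]).Nodup)
    (h₀₁ : G.Adj v₀ v₁) (h₀₂ : G.Adj v₀ v₂) (h₀l : ∀ x ∈ l, G.Adj v₀ x)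
    (h₁a : G.Adj v₁ a) (h₁b : G.Adj v₁ b) (h₂c : G.Adj v₂ c) : treeDD n ⊑ G := by
  -- `L[i]` is the image of the vertex `i` of `treeDD n`.
  set L := [v₀, v₁, v₂] ++ l ++ [a, b, c]
  have hlen : L.length = n := by simp [L, hl]; omega
  have hlen₁ : ([v₀, v₁, v₂] ++ l).length = n - 3 := by simp [hl]; omega
  have htail : ∀ i (hi : i < L.length), n - 3 ≤ i →
      L[i] = [a, b, c][i - (n - 3)]'(by simp; omega) := by
    intro i hi h
    rw [List.getElem_append_right (by omega)]
    simp only [hlen₁]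
  have ha : L[n - 3]'(by omega) = a := by rw [htail _ _ le_rfl]; simp
  have hb : L[n - 2]'(by omega) = b := by
    rw [htail _ _ (by omega)]; simp [show n - 2 - (n - 3) = 1 by omega]
  have hc : L[n - 1]'(by omega) = c := by
    rw [htail _ _ (by omega)]; simp [show n - 1 - (n - 3) = 2 by omega]
  have hv₀ : ∀ i (hi : i < L.length), 1 ≤ i → i ≤ n - 4 → G.Adj v₀ L[i] := by
    intro i hi h1 h4
    obtain rfl | rfl | h3 : i = 1 ∨ i = 2 ∨ 3 ≤ i := by omega
    · exact h₀₁
    · exact h₀₂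
    · rw [List.getElem_append_left (by omega), List.getElem_append_right (by simpa using h3)]
      exact h₀l _ (List.getElem_mem _)
  have hedge : ∀ i j : Fin n, ((i : ℕ) = 0 ∧ 1 ≤ (j : ℕ) ∧ (j : ℕ) ≤ n - 4) ∨
      ((i : ℕ) = 1 ∧ ((j : ℕ) = n - 3 ∨ (j : ℕ) = n - 2)) ∨ ((i : ℕ) = 2 ∧ (j : ℕ) = n - 1) →
      G.Adj L[(i : ℕ)] L[(j : ℕ)] := by
    rintro ⟨i, hi⟩ ⟨j, hj⟩ (⟨rfl, h1, h4⟩ | ⟨rfl, rfl | rfl⟩ | ⟨rfl, rfl⟩)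
    · exact hv₀ j _ h1 h4
    · rw [ha]; exact h₁a
    · rw [hb]; exact h₁b
    · rw [hc]; exact h₂c
  refine contains_iff_isContained.1
    ⟨⟨fun i => L[(i : ℕ)], fun i j h => Fin.ext (hnodup.getElem_inj_iff.1 h)⟩, fun i j hij => ?_⟩
  rcases ((fromRel_adj ..).1 hij).2 with h | h
  exacts [hedge i j h, (hedge j i h).symm]

section MinDegree

variable {V : Type*} [Fintype V] {G : SimpleGraph V} [DecidableRel G.Adj] {n : ℕ}

theorem SimpleGraph.exists_adj_notMem_of_card_lt_degree (v : V) {t : Finset V}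
    (h : #t < G.degree v) : ∃ x, G.Adj v x ∧ x ∉ t := by
  obtain ⟨x, hx, hxt⟩ := exists_mem_notMem_of_card_lt_card (s := t) (t := G.neighborFinset v)
    (by rwa [card_neighborFinset_eq_degree])
  exact ⟨x, (mem_neighborFinset ..).1 hx, hxt⟩

variable [DecidableEq V]

theorem treeDD_isContained_of_adj {v₀ v₁ v₂ a b c : V} (hn : 6 ≤ n)
    (hdistinct : [v₀, v₁, v₂, a, b, c].Nodup) (h₀₁ : G.Adj v₀ v₁) (h₀₂ : G.Adj v₀ v₂)
    (h₁a : G.Adj v₁ a) (h₁b : G.Adj v₁ b) (h₂c : G.Adj v₂ c)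
    (hleaves : n - 6 ≤ #(G.neighborFinset v₀ \ {v₁, v₂, a, b, c})) : treeDD n ⊑ G := by
  obtain ⟨S, hS, hScard⟩ := exists_subset_card_eq hleaves
  have hSv : ∀ s ∈ S, G.Adj v₀ s ∧ s ≠ v₁ ∧ s ≠ v₂ ∧ s ≠ a ∧ s ≠ b ∧ s ≠ c := fun s hs => by
    have := hS hs
    simp only [mem_sdiff, mem_neighborFinset, mem_insert, mem_singleton] at this
    tauto
  refine treeDD_isContained_of_list hn (by simp [hScard]) ?_ h₀₁ h₀₂
    (fun s hs => (hSv s (mem_toList.1 hs)).1) h₁a h₁b h₂c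
  have hSv₀ : ∀ s ∈ S, s ≠ v₀ := fun s hs => (hSv s hs).1.ne'
  simp only [List.nodup_cons, List.mem_cons, List.not_mem_nil] at hdistinct
  simp only [List.nodup_append, S.nodup_toList, List.nodup_cons, List.mem_cons, mem_toList,
    List.mem_append, List.not_mem_nil, List.nodup_nil, or_false] at hdistinct ⊢
  grind

theorem exists_adj_adj_of_compl_adj {x y : V} (hxy : Gᶜ.Adj x y)
    (hcard : Fintype.card V < G.degree x + G.degree y + 2) : ∃ z, G.Adj x z ∧ G.Adj y z := by
  obtain ⟨hne, hnadj⟩ := (compl_adj ..).1 hxy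
  have hsub : ∀ u, u = x ∨ u = y → G.neighborFinset u ⊆ (univ.erase x).erase y :=
    fun u hu z hz => by
      rw [mem_neighborFinset] at hz
      refine mem_erase.2 ⟨?_, mem_erase.2 ⟨?_, mem_univ z⟩⟩ <;> rintro rfl <;>
        rcases hu with rfl | rfl
      exacts [hnadj hz, G.irrefl hz, G.irrefl hz, hnadj hz.symm]
  have hcard₂ : 2 ≤ Fintype.card V := by simpa [card_pair hne] using card_le_univ {x, y}
  obtain ⟨z, hz⟩ := inter_nonempty_of_card_lt_card_add_card (hsub x (.inl rfl)) (hsub y (.inr rfl))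
    (by
      rw [card_erase_of_mem (mem_erase.2 ⟨hne.symm, mem_univ y⟩), card_erase_of_mem (mem_univ x),
        card_univ, card_neighborFinset_eq_degree, card_neighborFinset_eq_degree]
      omega)
  simp only [mem_inter, mem_neighborFinset] at hz
  exact ⟨z, hz⟩

theorem treeDD_isContained_of_le_card_erase (hn : 8 ≤ n) (hdeg : ∀ v, n - 3 ≤ G.degree v)
    {v₀ v₂ c : V} (h₀₂ : G.Adj v₀ v₂) (h₂c : G.Adj v₂ c)
    (hc₀ : c ≠ v₀) (hD : n - 2 ≤ #((G.neighborFinset v₀).erase c)) : treeDD n ⊑ G := by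
  obtain ⟨v₁, h₀₁, hv₁⟩ := G.exists_adj_notMem_of_card_lt_degree v₀ (t := {v₂, c})
    (card_le_two.trans_lt (by have := hdeg v₀; omega))
  obtain ⟨a, h₁a, ha⟩ := G.exists_adj_notMem_of_card_lt_degree v₁ (t := {v₀, v₂, c})
    (card_le_three.trans_lt (by have := hdeg v₁; omega))
  obtain ⟨b, h₁b, hb⟩ := G.exists_adj_notMem_of_card_lt_degree v₁ (t := {v₀, v₂, c, a})
    (card_le_four.trans_lt (by have := hdeg v₁; omega))
  simp only [mem_insert, mem_singleton, not_or] at hv₁ ha hb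
  refine treeDD_isContained_of_adj (by omega) ?_ h₀₁ h₀₂ h₁a h₁b h₂c ?_
  · have := h₀₁.ne; have := h₀₂.ne; have := h₂c.ne; have := h₁a.ne; have := h₁b.ne
    simp only [List.nodup_cons, List.mem_cons, List.not_mem_nil, List.nodup_nil]
    grind
  · calc n - 6 ≤ #((G.neighborFinset v₀).erase c) - #{v₁, v₂, a, b} := by
          have := card_le_four (a := v₁) (b := v₂) (c := a) (d := b); omega
      _ ≤ #((G.neighborFinset v₀).erase c \ {v₁, v₂, a, b}) := le_card_sdiff _ _
      _ ≤ #(G.neighborFinset v₀ \ {v₁, v₂, a, b, c}) := card_le_card fun x hx => by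
          simp only [mem_sdiff, mem_erase, mem_insert, mem_singleton] at hx ⊢
          tauto

theorem treeDD_isContained_of_two_compl_adj (hn : 8 ≤ n) (hdeg : ∀ v, n - 3 ≤ G.degree v)
    {v₀ v₁ a b : V} (h₀₁ : G.Adj v₀ v₁)
    (h₀a : Gᶜ.Adj v₀ a) (h₀b : Gᶜ.Adj v₀ b) (hab : a ≠ b) (h₁a : G.Adj v₁ a) (h₁b : G.Adj v₁ b) :
    treeDD n ⊑ G := by
  rw [compl_adj] at h₀a h₀b
  obtain ⟨v₂, h₀₂, hv₂⟩ := G.exists_adj_notMem_of_card_lt_degree v₀ (t := {v₁})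
    (by rw [card_singleton]; have := hdeg v₀; omega)
  obtain ⟨c, h₂c, hc⟩ := G.exists_adj_notMem_of_card_lt_degree v₂ (t := {v₀, v₁, a, b})
    (card_le_four.trans_lt (by have := hdeg v₂; omega))
  simp only [mem_insert, mem_singleton, not_or] at hv₂ hc
  refine treeDD_isContained_of_adj (by omega) ?_ h₀₁ h₀₂ h₁a h₁b h₂c ?_
  · have := h₀₁.ne; have := h₀₂.ne; have := h₂c.ne; have := h₁a.ne; have := h₁b.ne
    have : v₂ ≠ a := by rintro rfl; exact h₀a.2 h₀₂
    have : v₂ ≠ b := by rintro rfl; exact h₀b.2 h₀₂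
    simp only [List.nodup_cons, List.mem_cons, List.not_mem_nil, List.nodup_nil]
    grind
  · calc n - 6 ≤ #(G.neighborFinset v₀) - #{v₁, v₂, c} := by
          have := card_le_three (a := v₁) (b := v₂) (c := c)
          have := hdeg v₀
          rw [card_neighborFinset_eq_degree]; omega
      _ ≤ #(G.neighborFinset v₀ \ {v₁, v₂, c}) := le_card_sdiff _ _
      _ ≤ #(G.neighborFinset v₀ \ {v₁, v₂, a, b, c}) := card_le_card fun x hx => by
          simp only [mem_sdiff, mem_neighborFinset, mem_insert, mem_singleton] at hx ⊢
          exact ⟨hx.1, by rintro (rfl | rfl | rfl | rfl | rfl) <;> tauto⟩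

theorem treeDD_isContained_of_unique_compl_adj (hn : 8 ≤ n) (hdeg : ∀ v, n - 3 ≤ G.degree v)
    {v₀ : V}
    (hunique : ∀ v₁ a b, G.Adj v₀ v₁ → Gᶜ.Adj v₀ a → Gᶜ.Adj v₀ b →
      G.Adj v₁ a → G.Adj v₁ b → a = b)
    {v₁ v₂ a c : V} (h₀₁ : G.Adj v₀ v₁) (h₀₂ : G.Adj v₀ v₂) (h₀a : Gᶜ.Adj v₀ a)
    (h₀c : Gᶜ.Adj v₀ c) (hac : a ≠ c) (h₁a : G.Adj v₁ a) (h₂c : G.Adj v₂ c) : treeDD n ⊑ G := by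
  have hv₁₂ : v₁ ≠ v₂ := by rintro rfl; exact hac (hunique v₁ a c h₀₁ h₀a h₀c h₁a h₂c)
  obtain ⟨b, h₁b, hb⟩ := G.exists_adj_notMem_of_card_lt_degree v₁ (t := {v₀, a, v₂})
    (card_le_three.trans_lt (by have := hdeg v₁; omega))
  simp only [mem_insert, mem_singleton, not_or] at hb
  -- `b` is a second neighbour of `v₁` besides `a`, so it cannot lie outside `N[v₀]`.
  have h₀b : G.Adj v₀ b := by
    by_contra h
    exact hb.2.1 (hunique v₁ b a h₀₁ ((compl_adj ..).2 ⟨Ne.symm hb.1, h⟩) h₀a h₁b h₁a)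
  rw [compl_adj] at h₀a h₀c
  refine treeDD_isContained_of_adj (by omega) ?_ h₀₁ h₀₂ h₁a h₁b h₂c ?_
  · have := h₀₁.ne; have := h₀₂.ne; have := h₂c.ne; have := h₁a.ne; have := h₁b.ne
    have : v₁ ≠ c := by rintro rfl; exact h₀c.2 h₀₁
    have : v₂ ≠ a := by rintro rfl; exact h₀a.2 h₀₂
    have : b ≠ c := by rintro rfl; exact h₀c.2 h₀b
    simp only [List.nodup_cons, List.mem_cons, List.not_mem_nil, List.nodup_nil]
    grind
  · calc n - 6 ≤ #(G.neighborFinset v₀) - #{v₁, v₂, b} := by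
          have := card_le_three (a := v₁) (b := v₂) (c := b)
          have := hdeg v₀
          rw [card_neighborFinset_eq_degree]; omega
      _ ≤ #(G.neighborFinset v₀ \ {v₁, v₂, b}) := le_card_sdiff _ _
      _ ≤ #(G.neighborFinset v₀ \ {v₁, v₂, a, b, c}) := card_le_card fun x hx => by
          simp only [mem_sdiff, mem_neighborFinset, mem_insert, mem_singleton] at hx ⊢
          exact ⟨hx.1, by rintro (rfl | rfl | rfl | rfl | rfl) <;> tauto⟩

theorem treeDD_isContained_of_degree_eq (hn : 8 ≤ n) (hdeg : ∀ v, n - 3 ≤ G.degree v)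
    (hV : Fintype.card V = 2 * n - 5) {v₀ : V}
    (h₀ : G.degree v₀ = n - 3) : treeDD n ⊑ G := by
  have hR : 1 < #(Gᶜ.neighborFinset v₀) := by
    rw [card_neighborFinset_eq_degree, degree_compl, hV, h₀]; omega
  have hcommon : ∀ r, Gᶜ.Adj v₀ r → ∃ u, G.Adj v₀ u ∧ G.Adj r u := fun r hr =>
    exists_adj_adj_of_compl_adj hr (by rw [hV, h₀]; have := hdeg r; omega)
  by_cases hunique : ∀ v₁ a b, G.Adj v₀ v₁ → Gᶜ.Adj v₀ a → Gᶜ.Adj v₀ b →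
      G.Adj v₁ a → G.Adj v₁ b → a = b
  · obtain ⟨a, ha, c, hc, hac⟩ := one_lt_card.1 hR
    rw [mem_neighborFinset] at ha hc
    obtain ⟨v₁, h₀₁, h₁a⟩ := hcommon a ha
    obtain ⟨v₂, h₀₂, h₂c⟩ := hcommon c hc
    exact treeDD_isContained_of_unique_compl_adj hn hdeg hunique h₀₁ h₀₂ ha hc hac h₁a.symm
      h₂c.symm
  · push Not at hunique
    obtain ⟨v₁, a, b, h₀₁, h₀a, h₀b, h₁a, h₁b, hab⟩ := hunique
    exact treeDD_isContained_of_two_compl_adj hn hdeg h₀₁ h₀a h₀b hab h₁a h₁b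

theorem treeDD_isContained_of_le_degree (hn : 8 ≤ n) (hdeg : ∀ v, n - 3 ≤ G.degree v)
    (hV : Fintype.card V = 2 * n - 5) : treeDD n ⊑ G := by
  obtain ⟨v₀⟩ : Nonempty V := Fintype.card_pos_iff.1 (by omega)
  rcases (hdeg v₀).eq_or_lt with h₀ | h₀
  · exact treeDD_isContained_of_degree_eq hn hdeg hV h₀.symm
  obtain ⟨c, hc⟩ | hR := (Gᶜ.neighborFinset v₀).eq_empty_or_nonempty.symm
  · rw [mem_neighborFinset] at hc
    obtain ⟨v₂, h₀₂, hc₂⟩ := exists_adj_adj_of_compl_adj hc (by rw [hV]; have := hdeg c; omega)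
    rw [compl_adj] at hc
    refine treeDD_isContained_of_le_card_erase hn hdeg h₀₂ hc₂.symm hc.1.symm ?_
    rw [erase_eq_of_notMem (by simpa using hc.2), card_neighborFinset_eq_degree]
    omega
  · have hdeg₀ : 2 * n - 6 ≤ G.degree v₀ := by
      have := degree_compl G v₀
      rw [← card_neighborFinset_eq_degree Gᶜ, hR, card_empty, hV] at this
      omega
    obtain ⟨v₂, h₀₂, -⟩ := G.exists_adj_notMem_of_card_lt_degree v₀ (t := ∅) (by simp; omega)
    obtain ⟨c, h₂c, hc⟩ := G.exists_adj_notMem_of_card_lt_degree v₂ (t := {v₀})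
      (by rw [card_singleton]; have := hdeg v₂; omega)
    refine treeDD_isContained_of_le_card_erase hn hdeg h₀₂ h₂c (by simpa using hc) ?_
    have := pred_card_le_card_erase (s := G.neighborFinset v₀) (a := c)
    rw [card_neighborFinset_eq_degree] at this
    omega

end MinDegree

theorem contains_starGraph_or_compl_treeDD {V : Type*} [Fintype V] {n : ℕ} (hn : 8 ≤ n)
    (hV : Fintype.card V = 2 * n - 5) (G : SimpleGraph V) :
    Contains G (_root_.starGraph (n - 1)) ∨ Contains Gᶜ (treeDD n) := by
  classical
  refine or_iff_not_imp_left.2 fun h => contains_iff_isContained.2 <|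
    treeDD_isContained_of_le_degree hn (fun v => ?_) hV
  rw [contains_starGraph_iff (by omega)] at h
  push Not at h
  have := h v
  rw [degree_compl, hV]
  omega

theorem stmt15 (n : ℕ) (hn : 10 ≤ n) :
    ramseyNumber (_root_.starGraph (n - 1)) (treeDD n) = 2 * n - 5 := by
  have hmem : 2 * n - 5 ∈ {p | 0 < p ∧ ∀ G : SimpleGraph (Fin p),
      Contains G (_root_.starGraph (n - 1)) ∨ Contains Gᶜ (treeDD n)} :=
    ⟨by omega, contains_starGraph_or_compl_treeDD (by omega) (Fintype.card_fin _)⟩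
  refine le_antisymm (Nat.sInf_le hmem) (le_csInf ⟨_, hmem⟩ fun p ⟨_, hp⟩ => ?_)
  by_contra! hlt
  obtain ⟨G, hstar, htree⟩ := exists_not_contains_starGraph_not_contains_compl
    (p := p) (m := n - 3) (H := treeDD n) (by omega) (treeDD_connected (by omega)) (by simp; omega)
  rw [show n - 3 + 2 = n - 1 by omega] at hstar
  exact (hp G).elim hstar htree
end

section
/- Let $n \ge 10$. Then $r(T_{n-3}', T_n'') = 2n-9$, where $T_{n-3}'$ is the unique tree on $n-3$ vertices with maximum degree $n-5$, and $T_n''$ is the tree defined below. -/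
open SimpleGraph

/-!
Lower bound: on `2n - 10` vertices take two disjoint cliques of size `n - 5`. They contain no
`T'_{n-3}`, which is connected with `n - 3` vertices, and their complement is complete bipartite
with parts of size `n - 5`, so it has no vertex of degree `n - 4`, as the centre of `T_n''` needs.

Upper bound: let `G` on `2n - 9` vertices contain no `T'_{n-3}`. If some `v` has `G`-degree at
least `n - 4`, all neighbours of `v` are leaves of `G`, so in `Gᶜ` each of them has degree
`2n - 11 ≥ n - 1` and `T_n''` embeds greedily around one of them. Otherwise, if some `v` has
`G`-degree `n - 5`, the closed neighbourhood `N[v]` is a union of components of `G`, and a vertex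
outside it has, like all its `G`-neighbours, `G`-degree at most `n - 6`; if every `G`-degree is
at most `n - 6`, any vertex has this property. Such a vertex is the centre of `T_n''` in `Gᶜ`:
either its `Gᶜ`-degree is at least `n - 1` and the greedy embedding works, or it has few
non-neighbours, each with many `Gᶜ`-neighbours in its neighbourhood, and double counting these
edges yields a neighbour with two `Gᶜ`-neighbours outside the neighbourhood, leaving room for
the leaves of `T_n''`.
-/

section Embedding

variable {V : Type*}

theorem contains_fromRel_of_injective {m : ℕ} {G : SimpleGraph V} {r : Fin m → Fin m → Prop}
    (f : Fin m → V) (hf : Function.Injective f) (h : ∀ i j, r i j → G.Adj (f i) (f j)) :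
    Contains G (SimpleGraph.fromRel r) := by
  refine ⟨⟨f, hf⟩, fun i j hij => ?_⟩
  obtain ⟨-, hij | hji⟩ := (SimpleGraph.fromRel_adj _ _ _).1 hij
  exacts [h i j hij, (h j i hji).symm]

theorem contains_fromRel_of_nodup {m : ℕ} {G : SimpleGraph V} {r : Fin m → Fin m → Prop}
    (l : List V) (hlen : l.length = m) (hl : l.Nodup)
    (h : ∀ i j : Fin m, r i j → G.Adj (l[(i : ℕ)]'(hlen ▸ i.2)) (l[(j : ℕ)]'(hlen ▸ j.2))) :
    Contains G (SimpleGraph.fromRel r) := by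
  subst hlen
  exact contains_fromRel_of_injective l.get (List.nodup_iff_injective_get.1 hl) h

theorem contains_doubleStar {G : SimpleGraph V} {k : ℕ} {v u w : V} (L : List V)
    (hL : L.length = k) (hnd : (v :: u :: (L ++ [w])).Nodup)
    (hu : G.Adj v u) (hvL : ∀ x ∈ L, G.Adj v x) (hw : G.Adj u w) :
    Contains G (doubleStar k 1) := by
  subst hL
  refine contains_fromRel_of_nodup _ (by simp) hnd ?_
  rintro ⟨i, hi⟩ ⟨j, hj⟩ (⟨rfl, rfl⟩ | ⟨rfl, hj₁, hj₂⟩ | ⟨rfl, hj₁⟩)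
  · simpa using hu
  · dsimp only at hj₁ hj₂
    obtain ⟨m, rfl⟩ := Nat.exists_eq_add_of_le' hj₁
    have hm : m < L.length := by omega
    simpa [List.getElem_append_left hm] using hvL _ (List.getElem_mem hm)
  · obtain rfl : j = L.length + 2 := by dsimp only at hj₁; omega
    simpa using hw

theorem contains_treeDD {G : SimpleGraph V} {n : ℕ} (hn : 6 ≤ n) {v u₁ u₂ a b c : V}
    (L : List V) (hL : L.length = n - 6) (hnd : (v :: u₁ :: u₂ :: (L ++ [a, b, c])).Nodup)
    (hu₁ : G.Adj v u₁) (hu₂ : G.Adj v u₂) (hvL : ∀ x ∈ L, G.Adj v x)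
    (ha : G.Adj u₁ a) (hb : G.Adj u₁ b) (hc : G.Adj u₂ c) : Contains G (treeDD n) := by
  obtain ⟨k, rfl⟩ : ∃ k, n = k + 6 := ⟨n - 6, by omega⟩
  rw [Nat.add_sub_cancel] at hL
  refine contains_fromRel_of_nodup _ (by simp [hL]) hnd ?_
  rintro ⟨i, hi⟩ ⟨j, hj⟩ (⟨rfl, hj₁, hj₂⟩ | ⟨rfl, rfl | rfl⟩ | ⟨rfl, rfl⟩)
  · dsimp only at hj₁ hj₂
    obtain rfl | rfl | ⟨m, rfl⟩ : j = 1 ∨ j = 2 ∨ ∃ m, j = m + 3 := by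
      rcases j with _ | _ | _ | m <;> simp_all
    · simpa using hu₁
    · simpa using hu₂
    · have hm : m < L.length := by omega
      simpa [List.getElem_append_left hm] using hvL _ (List.getElem_mem hm)
  · simpa [show k + 6 - 3 = L.length + 3 by omega] using ha
  · simpa [show k + 6 - 2 = L.length + 1 + 3 by omega] using hb
  · simpa [show k + 6 - 1 = L.length + 2 + 3 by omega] using hc

open Finset

theorem Finset.exists_nodup_list_of_le_card {s : Finset V} {k : ℕ} (h : k ≤ #s) :
    ∃ L : List V, L.length = k ∧ L.Nodup ∧ ∀ x ∈ L, x ∈ s := by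
  obtain ⟨t, hts, rfl⟩ := exists_subset_card_eq h
  exact ⟨t.toList, t.length_toList, t.nodup_toList, fun x hx => hts (mem_toList.1 hx)⟩

variable [Fintype V] [DecidableEq V] {G : SimpleGraph V} [DecidableRel G.Adj]

theorem contains_doubleStar_of_le_card {k : ℕ} {v u w : V} (hu : G.Adj v u) (hw : G.Adj u w)
    (hwv : w ≠ v) (hk : k ≤ #(G.neighborFinset v \ {u, w})) : Contains G (doubleStar k 1) := by
  obtain ⟨L, hL, hLnd, hLmem⟩ := exists_nodup_list_of_le_card hk
  simp only [mem_sdiff, mem_neighborFinset, mem_insert, mem_singleton, not_or] at hLmem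
  refine contains_doubleStar L hL ?_ hu (fun x hx => (hLmem x hx).1) hw
  simp only [List.nodup_cons, List.mem_cons, List.mem_append, List.nodup_append]
  grind [SimpleGraph.Adj.ne, SimpleGraph.irrefl]

theorem contains_treeDD_of_le_card {n : ℕ} (hn : 6 ≤ n) {v u₁ u₂ a b c : V}
    (hu₁ : G.Adj v u₁) (hu₂ : G.Adj v u₂) (ha : G.Adj u₁ a) (hb : G.Adj u₁ b) (hc : G.Adj u₂ c)
    (hnd : [v, u₁, u₂, a, b, c].Nodup)
    (hk : n - 6 ≤ #(G.neighborFinset v \ {u₁, u₂, a, b, c})) : Contains G (treeDD n) := by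
  obtain ⟨L, hL, hLnd, hLmem⟩ := exists_nodup_list_of_le_card hk
  simp only [mem_sdiff, mem_neighborFinset, mem_insert, mem_singleton, not_or] at hLmem
  refine contains_treeDD hn L hL ?_ hu₁ hu₂ (fun x hx => (hLmem x hx).1) ha hb hc
  simp only [List.nodup_cons, List.mem_cons, List.mem_append, List.nodup_append] at hnd ⊢
  grind [SimpleGraph.Adj.ne, SimpleGraph.irrefl]

end Embedding

section LowerBound

variable {V : Type*}

theorem Contains.of_comap {U W : Type*} {G : SimpleGraph V} {H : SimpleGraph W} (e : U ↪ V)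
    (h : Contains (G.comap e) H) : Contains G H := by
  obtain ⟨f, hf⟩ := h
  exact ⟨f.trans e, hf⟩

theorem Contains.of_compl_comap {U W : Type*} {G : SimpleGraph V} {H : SimpleGraph W}
    (e : U ↪ V) (h : Contains (G.comap e)ᶜ H) : Contains Gᶜ H := by
  obtain ⟨f, hf⟩ := h
  refine ⟨f.trans e, fun a b hab => ?_⟩
  obtain ⟨hne, hG⟩ := (SimpleGraph.compl_adj _ _ _).1 (hf a b hab)
  exact (SimpleGraph.compl_adj _ _ _).2 ⟨e.injective.ne hne, hG⟩

theorem ramseyNumber_eq {α β : Type*} {G₁ : SimpleGraph α} {G₂ : SimpleGraph β} {N : ℕ}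
    (hN : 0 < N) (hup : ∀ G : SimpleGraph (Fin N), Contains G G₁ ∨ Contains Gᶜ G₂)
    [Fintype V] (G : SimpleGraph V) (hV : Fintype.card V + 1 = N)
    (h₁ : ¬Contains G G₁) (h₂ : ¬Contains Gᶜ G₂) : ramseyNumber G₁ G₂ = N := by
  refine le_antisymm (Nat.sInf_le ⟨hN, hup⟩) (le_csInf ⟨N, hN, hup⟩ ?_)
  rintro p ⟨-, hp⟩
  by_contra! hpN
  let e : Fin p ↪ V := (Fin.castLEEmb (by omega)).trans (Fintype.equivFin V).symm.toEmbedding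
  rcases hp (G.comap e) with h | h
  exacts [h₁ (h.of_comap e), h₂ (h.of_compl_comap e)]

theorem le_card_of_injective_of_fst_eq {m : ℕ} {α β : Type*} [Fintype β] (f : Fin m → α × β)
    (hf : Function.Injective f) (a : α) (ha : ∀ i, (f i).1 = a) : m ≤ Fintype.card β := by
  simpa using Fintype.card_le_of_injective (Prod.snd ∘ f)
    fun i j hij => hf (Prod.ext ((ha i).trans (ha j).symm) hij)

theorem not_contains_compl_comap_fst_doubleStar {k : ℕ} {α β : Type*} [Fintype β]
    (hβ : Fintype.card β < k + 3) :
    ¬Contains ((⊤ : SimpleGraph α).comap (Prod.fst : α × β → α))ᶜ (doubleStar k 1) := by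
  rintro ⟨f, hf⟩
  have fst_eq {i j} (h : (doubleStar k 1).Adj i j) : (f i).1 = (f j).1 := by
    simpa using (hf i j h).2
  have h01 : (doubleStar k 1).Adj 0 1 := by simp [doubleStar]
  have hfst (i : Fin (k + 1 + 2)) : (f i).1 = (f 0).1 := by
    rcases (by omega : (i : ℕ) = 0 ∨ 1 ≤ (i : ℕ) ∧ (i : ℕ) ≤ k + 1 ∨ k + 2 ≤ (i : ℕ))
      with hi | hi | hi
    · rw [show i = 0 from Fin.ext hi]
    · refine (fst_eq ?_).symm
      simp only [doubleStar, SimpleGraph.fromRel_adj, ne_eq, Fin.ext_iff, Fin.val_zero,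
        true_and]
      omega
    · refine ((fst_eq h01).trans (fst_eq ?_)).symm
      simp only [doubleStar, SimpleGraph.fromRel_adj, ne_eq, Fin.ext_iff, Fin.val_one,
        true_and]
      omega
  exact absurd (le_card_of_injective_of_fst_eq f f.injective _ hfst) (by omega)

theorem not_contains_comap_fst_treeDD {n : ℕ} {β : Type*} [Fintype β]
    (hβ : Fintype.card β < n - 4) :
    ¬Contains ((⊤ : SimpleGraph Bool).comap (Prod.fst : Bool × β → Bool)) (treeDD n) := by
  rintro ⟨f, hf⟩
  let g : Fin (n - 4) → Fin n := fun j => ⟨j + 1, by omega⟩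
  have hfst (j : Fin (n - 4)) : (f (g j)).1 = !(f ⟨0, by omega⟩).1 := by
    have : (treeDD n).Adj ⟨0, by omega⟩ (g j) := by simp [treeDD, g, Fin.ext_iff]
    simpa [Bool.eq_not] using (hf _ _ this).symm
  have hg : Function.Injective g := fun i j h => by simpa [g, Fin.ext_iff] using h
  exact absurd (le_card_of_injective_of_fst_eq _ (f.injective.comp hg) _ hfst) (by omega)

end LowerBound

section UpperBound

open Finset

theorem Finset.card_sub_card_le_card_sdiff {α : Type*} [DecidableEq α] {s t u : Finset α}
    (h : t ∩ u ⊆ s) : #u - #s ≤ #(u \ t) :=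
  (le_card_sdiff s u).trans <| card_le_card fun x hx => by
    rw [mem_sdiff] at hx ⊢
    exact ⟨hx.1, fun hxt => hx.2 (h (mem_inter.2 ⟨hxt, hx.1⟩))⟩

variable {V : Type*} [Fintype V] [DecidableEq V]

section

variable {H : SimpleGraph V} [DecidableRel H.Adj]

theorem contains_treeDD_of_sub_one_le_degree {n : ℕ} (hn : 6 ≤ n) {v u₁ u₂ : V}
    (hv : n - 1 ≤ H.degree v) (hu₁ : H.Adj v u₁) (hu₂ : H.Adj v u₂) (hne : u₁ ≠ u₂)
    (hd₁ : 4 ≤ H.degree u₁) (hd₂ : 5 ≤ H.degree u₂) : Contains H (treeDD n) := by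
  obtain ⟨a, ha, b, hb, hab⟩ := one_lt_card.1 (show 1 < #(H.neighborFinset u₁ \ {v, u₂}) by
    have := le_card_sdiff {v, u₂} (H.neighborFinset u₁)
    grind [card_le_two, card_neighborFinset_eq_degree])
  obtain ⟨c, hc, hc'⟩ := exists_mem_notMem_of_card_lt_card (s := {v, u₁, a, b})
    (t := H.neighborFinset u₂) (by grind [card_le_four, card_neighborFinset_eq_degree])
  simp only [mem_sdiff, mem_neighborFinset, mem_insert, mem_singleton, not_or] at ha hb hc hc'
  refine contains_treeDD_of_le_card hn hu₁ hu₂ ha.1 hb.1 hc ?_ ?_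
  · simp only [List.nodup_cons, List.mem_cons, List.not_mem_nil, or_false, List.nodup_nil]
    grind [SimpleGraph.Adj.ne]
  · grind [le_card_sdiff, card_le_five, card_neighborFinset_eq_degree]

theorem card_compl_insert_neighborFinset (v : V) :
    #(insert v (H.neighborFinset v))ᶜ = Fintype.card V - 1 - H.degree v := by
  rw [card_compl, card_insert_of_notMem (by simp), card_neighborFinset_eq_degree]
  omega

theorem degree_le_card_adj_neighborFinset_add {v x : V}
    (hx : x ∈ (insert v (H.neighborFinset v))ᶜ) :
    H.degree x ≤
      #{u ∈ H.neighborFinset v | H.Adj x u} + (#(insert v (H.neighborFinset v))ᶜ - 1) := by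
  rw [← card_neighborFinset_eq_degree, ← card_erase_of_mem hx]
  refine (card_le_card fun y hy => ?_).trans (card_union_le _ _)
  rw [mem_neighborFinset] at hy
  by_cases hyv : H.Adj v y
  · exact mem_union_left _ (by simp [hyv, hy])
  · refine mem_union_right _ (mem_erase.2 ⟨hy.ne', ?_⟩)
    simp only [mem_compl, mem_insert, mem_neighborFinset, not_or] at hx ⊢
    exact ⟨fun h => hx.2 (h ▸ hy.symm), hyv⟩

theorem exists_neighbor_one_lt_card_adj_outside {n : ℕ} (hn : 10 ≤ n)
    (hV : Fintype.card V = 2 * n - 9) {v : V} (hv : n - 4 ≤ H.degree v)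
    (hv' : H.degree v ≤ n - 2) (hfar : ∀ x, x ≠ v → ¬H.Adj v x → n - 4 ≤ H.degree x) :
    ∃ u ∈ H.neighborFinset v, 1 < #{x ∈ (insert v (H.neighborFinset v))ᶜ | H.Adj x u} := by
  set B := (insert v (H.neighborFinset v))ᶜ
  have hB : #B = 2 * n - 10 - H.degree v := by
    rw [card_compl_insert_neighborFinset, hV]; omega
  by_contra! h
  have hcount := card_nsmul_le_card_nsmul (s := B) (t := H.neighborFinset v) (r := H.Adj)
    (m := n - 3 - #B) (n := 1) (fun x hx => ?_) h
  · simp only [smul_eq_mul, mul_one, card_neighborFinset_eq_degree] at hcount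
    obtain ⟨t, ht, hd⟩ : ∃ t ≤ 2, H.degree v = n - 4 + t :=
      ⟨H.degree v - (n - 4), by omega, by omega⟩
    rw [show #B = n - 6 - t by omega, show n - 3 - (n - 6 - t) = 3 + t by omega, hd] at hcount
    interval_cases t <;> omega
  · have : H.degree x ≤ _ + (#B - 1) := degree_le_card_adj_neighborFinset_add hx
    simp only [B, mem_compl, mem_insert, mem_neighborFinset, not_or] at hx
    have := hfar x hx.1 hx.2
    simp only [bipartiteAbove, Nat.cast_id]
    omega

theorem contains_treeDD_of_degree_le_sub_two {n : ℕ} (hn : 10 ≤ n)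
    (hV : Fintype.card V = 2 * n - 9) {v : V} (hv : n - 4 ≤ H.degree v)
    (hv' : H.degree v ≤ n - 2) (hfar : ∀ x, x ≠ v → ¬H.Adj v x → n - 4 ≤ H.degree x)
    (hnbr : ∀ x, H.Adj v x → 5 ≤ H.degree x) : Contains H (treeDD n) := by
  have hB := card_compl_insert_neighborFinset (H := H) v
  obtain ⟨u₁, hu₁, h2⟩ := exists_neighbor_one_lt_card_adj_outside hn hV hv hv' hfar
  obtain ⟨a, ha, b, hb, hab⟩ := one_lt_card.1 h2
  simp only [mem_filter, mem_compl, mem_insert, mem_neighborFinset, not_or] at ha hb hu₁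
  by_cases hd : H.degree v = n - 4
  · obtain ⟨c, hc, hcab⟩ := exists_mem_notMem_of_card_lt_card (s := {a, b})
      (t := (insert v (H.neighborFinset v))ᶜ) (by grind [card_le_two])
    have hcv := degree_le_card_adj_neighborFinset_add hc
    simp only [mem_compl, mem_insert, mem_neighborFinset, not_or] at hc
    have := hfar c hc.1 hc.2
    obtain ⟨u₂, hu₂, hu₂₁⟩ := exists_mem_notMem_of_card_lt_card (s := {u₁})
      (t := {u ∈ H.neighborFinset v | H.Adj c u}) (by rw [card_singleton]; omega)
    simp only [mem_filter, mem_neighborFinset, mem_singleton, mem_insert, not_or]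
      at hu₂ hu₂₁ hcab
    refine contains_treeDD_of_le_card (by omega) hu₁ hu₂.1 ha.2.symm hb.2.symm hu₂.2.symm ?_ ?_
    · simp only [List.nodup_cons, List.mem_cons, List.not_mem_nil, or_false, List.nodup_nil]
      grind [SimpleGraph.Adj.ne]
    · have hsub : ({u₁, u₂, a, b, c} : Finset V) ∩ H.neighborFinset v ⊆ {u₁, u₂} := by
        intro x; simp only [mem_inter, mem_insert, mem_singleton, mem_neighborFinset]; grind
      have := card_sub_card_le_card_sdiff hsub
      grind [card_le_two, card_neighborFinset_eq_degree]
  · obtain ⟨u₂, hu₂, hu₂₁⟩ := exists_mem_notMem_of_card_lt_card (s := {u₁})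
      (t := H.neighborFinset v) (by rw [card_singleton, card_neighborFinset_eq_degree]; omega)
    obtain ⟨c, hc, hc'⟩ := exists_mem_notMem_of_card_lt_card (s := {v, u₁, a, b})
      (t := H.neighborFinset u₂) (by grind [card_le_four, card_neighborFinset_eq_degree])
    simp only [mem_neighborFinset, mem_singleton, mem_insert, not_or] at hu₂ hu₂₁ hc hc'
    refine contains_treeDD_of_le_card (by omega) hu₁ hu₂ ha.2.symm hb.2.symm hc ?_ ?_
    · simp only [List.nodup_cons, List.mem_cons, List.not_mem_nil, or_false, List.nodup_nil]
      grind [SimpleGraph.Adj.ne]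
    · have hsub : ({u₁, u₂, a, b, c} : Finset V) ∩ H.neighborFinset v ⊆ {u₁, u₂, c} := by
        intro x; simp only [mem_inter, mem_insert, mem_singleton, mem_neighborFinset]; grind
      have := card_sub_card_le_card_sdiff hsub
      grind [card_le_three, card_neighborFinset_eq_degree]

theorem contains_treeDD_of_sub_four_le_degree {n : ℕ} (hn : 10 ≤ n)
    (hV : Fintype.card V = 2 * n - 9) {v : V} (hv : n - 4 ≤ H.degree v)
    (hfar : ∀ x, x ≠ v → ¬H.Adj v x → n - 4 ≤ H.degree x)
    (hnbr : ∀ x, H.Adj v x → 5 ≤ H.degree x) : Contains H (treeDD n) := by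
  by_cases hv' : H.degree v ≤ n - 2
  · exact contains_treeDD_of_degree_le_sub_two hn hV hv hv' hfar hnbr
  · obtain ⟨u₁, hu₁, u₂, hu₂, hne⟩ := one_lt_card.1
      (by rw [card_neighborFinset_eq_degree]; omega : 1 < #(H.neighborFinset v))
    rw [mem_neighborFinset] at hu₁ hu₂
    exact contains_treeDD_of_sub_one_le_degree (by omega) (by omega) hu₁ hu₂ hne
      (by have := hnbr _ hu₁; omega) (hnbr _ hu₂)

end

section

variable {G : SimpleGraph V} [DecidableRel G.Adj] {n : ℕ}

theorem contains_compl_treeDD_of_sub_four_le_degree (hn : 10 ≤ n)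
    (hV : Fintype.card V = 2 * n - 9) (hG : ¬Contains G (doubleStar (n - 6) 1)) {v : V}
    (hv : n - 4 ≤ G.degree v) : Contains Gᶜ (treeDD n) := by
  have hleaf (u : V) (hu : G.Adj v u) (w : V) (hw : G.Adj u w) : w = v := by
    by_contra hwv
    refine hG (contains_doubleStar_of_le_card hu hw hwv ?_)
    have := le_card_sdiff {u, w} (G.neighborFinset v)
    grind [card_le_two, card_neighborFinset_eq_degree]
  have hdeg (u : V) (hu : G.Adj v u) : Gᶜ.degree u = 2 * n - 11 := by
    rw [degree_compl, hV, degree_eq_one_iff_existsUnique_adj.2 ⟨v, hu.symm, hleaf u hu⟩]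
    omega
  have hadj (x y : V) (hx : G.Adj v x) (hy : G.Adj v y) (hxy : x ≠ y) : Gᶜ.Adj x y :=
    (compl_adj G x y).2 ⟨hxy, fun h => hy.ne (hleaf x hx y h).symm⟩
  obtain ⟨u, hu, u₁, hu₁, u₂, hu₂, h₁, h₂, h₁₂⟩ := two_lt_card.1
    (by rw [card_neighborFinset_eq_degree]; omega : 2 < #(G.neighborFinset v))
  rw [mem_neighborFinset] at hu hu₁ hu₂
  exact contains_treeDD_of_sub_one_le_degree (by omega) (by rw [hdeg u hu]; omega)
    (hadj u u₁ hu hu₁ h₁) (hadj u u₂ hu hu₂ h₂) h₁₂ (by rw [hdeg u₁ hu₁]; omega)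
    (by rw [hdeg u₂ hu₂]; omega)

theorem exists_degree_le_sub_six_of_not_contains (hn : 10 ≤ n)
    (hV : Fintype.card V = 2 * n - 9) (hG : ¬Contains G (doubleStar (n - 6) 1))
    (hΔ : ∀ v, G.degree v ≤ n - 5) :
    ∃ v, G.degree v ≤ n - 6 ∧ ∀ x, G.Adj v x → G.degree x ≤ n - 6 := by
  by_cases hlow : ∀ v, G.degree v ≤ n - 6
  · have : Nonempty V := Fintype.card_pos_iff.1 (by omega)
    exact ⟨Classical.arbitrary V, hlow _, fun x _ => hlow x⟩
  push Not at hlow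
  obtain ⟨v, hv⟩ := hlow
  set D := insert v (G.neighborFinset v)
  have hclosed (x : V) (hx : x ∈ D) (y : V) (hxy : G.Adj x y) : y ∈ D := by
    by_contra hy
    simp only [D, mem_insert, mem_neighborFinset, not_or] at hx hy
    obtain rfl | hx := hx
    · exact hy.2 hxy
    refine hG (contains_doubleStar_of_le_card hx hxy hy.1 ?_)
    have hsub : ({x, y} : Finset V) ∩ G.neighborFinset v ⊆ {x} := by
      intro z; simp only [mem_inter, mem_insert, mem_singleton, mem_neighborFinset]; grind
    have := card_sub_card_le_card_sdiff hsub
    rw [card_singleton, card_neighborFinset_eq_degree] at this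
    have := hΔ v
    omega
  have hout (x : V) (hx : x ∉ D) : G.degree x ≤ n - 6 := by
    have h₁ : G.neighborFinset x ⊆ Dᶜ.erase x := fun y hy => by
      rw [mem_neighborFinset] at hy
      exact mem_erase.2 ⟨hy.ne', mem_compl.2 fun hyD => hx (hclosed y hyD x hy.symm)⟩
    have := card_le_card h₁
    rw [card_erase_of_mem (mem_compl.2 hx), card_compl_insert_neighborFinset, hV,
      card_neighborFinset_eq_degree] at this
    have := hΔ v
    omega
  obtain ⟨r, -, hr⟩ := exists_mem_notMem_of_card_lt_card (s := D) (t := univ) (by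
    rw [card_univ, hV, card_insert_of_notMem (by simp), card_neighborFinset_eq_degree]
    have := hΔ v
    omega)
  exact ⟨r, hout r hr, fun x hx => hout x fun hxD => hr (hclosed x hxD r hx.symm)⟩

end

theorem contains_doubleStar_or_compl_treeDD {n : ℕ} (hn : 10 ≤ n) (hV : Fintype.card V = 2 * n - 9)
    (G : SimpleGraph V) : Contains G (doubleStar (n - 6) 1) ∨ Contains Gᶜ (treeDD n) := by
  classical
  refine or_iff_not_imp_left.2 fun hG => ?_
  by_cases hΔ : ∃ v, n - 4 ≤ G.degree v
  · obtain ⟨v, hv⟩ := hΔ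
    exact contains_compl_treeDD_of_sub_four_le_degree hn hV hG hv
  push Not at hΔ
  obtain ⟨v, hv, hnv⟩ := exists_degree_le_sub_six_of_not_contains hn hV hG fun v => by
    have := hΔ v; omega
  have hdeg (x : V) : Gᶜ.degree x = 2 * n - 10 - G.degree x := by
    rw [degree_compl, hV]; omega
  refine contains_treeDD_of_sub_four_le_degree hn hV (v := v) (by rw [hdeg]; omega) ?_ ?_
  · intro x hxv hx
    have := hnv x (by simpa [compl_adj, hxv.symm] using hx)
    rw [hdeg]; omega
  · intro x _
    have := hΔ x
    rw [hdeg]; omega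

end UpperBound

theorem stmt18 (n : ℕ) (hn : 10 ≤ n) :
    ramseyNumber (doubleStar (n - 6) 1) (treeDD n) = 2 * n - 9 :=
  ramseyNumber_eq (by omega) (contains_doubleStar_or_compl_treeDD hn (by simp))
    ((⊤ : SimpleGraph Bool).comap (Prod.fst : Bool × Fin (n - 5) → Bool))ᶜ (by simp; omega)
    (not_contains_compl_comap_fst_doubleStar (by simp; omega))
    (by rw [compl_compl]; exact not_contains_comap_fst_treeDD (by simp; omega))
end
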